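/- arXiv:1805.06191 — 7 statements merged into one kernel-verified Lean document; each statement's English description precedes it below -/
import Mathlib

section
/- In the network externalities model, for every agent i the LPT partition L_i satisfies U_i(worst_i(L_i)) ≥ EMMS_i / 2; that is, the worst allocation of the LPT partition guarantees agent i at least half of his extended-maximin-share. -/
/-!
Network externalities model.  Items form a finite type `Item`; a partition of the
items into `n` bundles is a function `Item → Fin n`.  An allocation is a bijection
`A : Fin n ≃ Fin n` assigning bundle `j` to agent `A j`.  We fix one agent `i`;
`V b` is his value for item `b` and `w j` is the influence `w_{j,i}` of agent `j`
on agent `i`.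
-/

/-- Value of bundle `j` of the partition `P` with respect to the valuation `V`. -/
noncomputable def bundleVal {Item : Type*} [Fintype Item] (V : Item → ℝ) {n : ℕ}
    (P : Item → Fin n) (j : Fin n) : ℝ :=
  ∑ b, if P b = j then V b else 0

/-- Utility of the agent with influence weights `w` and valuation `V` when the
partition `P` is distributed according to the bijection `A` (bundle `j` goes to
agent `A j`). -/
noncomputable def utility {Item : Type*} [Fintype Item] (V : Item → ℝ) {n : ℕ}
    (w : Fin n → ℝ) (P : Item → Fin n) (A : Equiv.Perm (Fin n)) : ℝ :=
  ∑ j, w (A j) * bundleVal V P j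

/-- Utility of the worst allocation of the partition `P` for the agent. -/
noncomputable def worstU {Item : Type*} [Fintype Item] (V : Item → ℝ) {n : ℕ}
    (w : Fin n → ℝ) (P : Item → Fin n) : ℝ :=
  ⨅ A : Equiv.Perm (Fin n), utility V w P A

/-- Extended-maximin-share: the maximum, over all partitions of the items into
`n` bundles, of the utility of the worst allocation. -/
noncomputable def EMMS {Item : Type*} [Fintype Item] (V : Item → ℝ) {n : ℕ}
    (w : Fin n → ℝ) : ℝ :=
  ⨆ P : Item → Fin n, worstU V w P

/-- An index of a bundle of minimum load. -/
noncomputable def argminLoad {n : ℕ} (hn : 0 < n) (load : Fin n → ℝ) : Fin n :=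
  Classical.choose
    (Finset.exists_min_image Finset.univ load ⟨⟨0, hn⟩, Finset.mem_univ _⟩)

/-- The LPT partition obtained by processing the items in the order given by the
list `l` (which is intended to enumerate the items in non-increasing order of
value), each time putting the current item into a bundle of minimum current
value. -/
noncomputable def lptOfList {Item : Type*} [DecidableEq Item] {n : ℕ} (hn : 0 < n)
    (V : Item → ℝ) (l : List Item) : Item → Fin n :=
  (l.foldl
    (fun st b =>
      (Function.update st.1 b (argminLoad hn st.2),
       Function.update st.2 (argminLoad hn st.2) (st.2 (argminLoad hn st.2) + V b)))
    ((fun _ => (⟨0, hn⟩ : Fin n)), fun _ => (0 : ℝ))).1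

/-!
Greedy LPT leaves every bundle holding two or more items with value at most twice the minimum
bundle value: an item joining a nonempty minimum bundle is no larger than the item already
there, hence no larger than that bundle's value. From this, by induction on `t`, the `t`
smallest bundles of any partition `P` are worth at most twice the `t` smallest bundles of the
LPT partition `L`. The worst allocation pairs decreasing weights with increasing bundle
values (rearrangement inequality), and by Abel summation such a pairing with nonnegative
weights is monotone in the prefix sums of the sorted values; so the worst allocation of any
`P` is worth at most twice that of `L`.
-/

open Finset

section SortedValues

variable {n : ℕ}

/-- The `k`-th smallest entry of `x`, counting from `0`, with junk value `0` for `k ≥ n`. -/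
noncomputable def sortedVal (x : Fin n → ℝ) (k : ℕ) : ℝ :=
  if h : k < n then x (Tuple.sort x ⟨k, h⟩) else 0

noncomputable def lowSum (x : Fin n → ℝ) (t : ℕ) : ℝ :=
  ∑ k ∈ range t, sortedVal x k

theorem sortedVal_val (x : Fin n → ℝ) (i : Fin n) : sortedVal x i = x (Tuple.sort x i) := by
  simp [sortedVal]

theorem sortedVal_le_sortedVal (x : Fin n → ℝ) {i j : ℕ} (hij : i ≤ j) (hj : j < n) :
    sortedVal x i ≤ sortedVal x j := by
  simp only [sortedVal, dif_pos hj, dif_pos (hij.trans_lt hj)]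
  exact Tuple.monotone_sort x (Fin.mk_le_mk.2 hij)

theorem sortedVal_nonneg {x : Fin n → ℝ} (hx : ∀ j, 0 ≤ x j) (k : ℕ) : 0 ≤ sortedVal x k := by
  unfold sortedVal
  split_ifs
  exacts [hx _, le_rfl]

theorem lowSum_nonneg {x : Fin n → ℝ} (hx : ∀ j, 0 ≤ x j) (t : ℕ) : 0 ≤ lowSum x t :=
  sum_nonneg fun k _ => sortedVal_nonneg hx k

theorem sum_comp_eq_sum_sortedVal (x : Fin n → ℝ) (f : ℝ → ℝ) :
    ∑ j, f (x j) = ∑ k ∈ range n, f (sortedVal x k) := by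
  rw [← Equiv.sum_comp (Tuple.sort x), ← Fin.sum_univ_eq_sum_range (fun k => f (sortedVal x k))]
  simp only [sortedVal_val]

theorem sum_min_le_lowSum_add (x : Fin n → ℝ) {t : ℕ} (ht : t < n) (y : ℝ) :
    ∑ j, min (x j) y ≤ lowSum x (t + 1) + (n - (t + 1)) • y := by
  rw [sum_comp_eq_sum_sortedVal x (min · y), ← sum_range_add_sum_Ico _ ht, lowSum]
  refine add_le_add (sum_le_sum fun k _ => min_le_left _ _) ?_
  simpa using sum_le_card_nsmul (Ico (t + 1) n) (fun k => min (sortedVal x k) y) y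
    fun k _ => min_le_right _ y

theorem sum_min_sortedVal_eq (x : Fin n → ℝ) {t : ℕ} (ht : t < n) :
    ∑ j, min (x j) (sortedVal x t) = lowSum x (t + 1) + (n - (t + 1)) • sortedVal x t := by
  rw [sum_comp_eq_sum_sortedVal x (min · (sortedVal x t)), ← sum_range_add_sum_Ico _ ht, lowSum]
  congr 1
  · refine sum_congr rfl fun k hk => min_eq_left (sortedVal_le_sortedVal x ?_ ht)
    simpa [Nat.lt_succ_iff] using hk
  · rw [sum_congr rfl fun k hk => min_eq_right (sortedVal_le_sortedVal x ?_ (mem_Ico.1 hk).2)]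
    · simp
    · exact (Nat.le_succ t).trans (mem_Ico.1 hk).1

theorem lowSum_succ_le_of_sum_min_le {x z : Fin n → ℝ} {t : ℕ} (ht : t < n)
    (h : ∑ j, min (x j) (sortedVal x t) ≤ ∑ j, min (z j) (sortedVal x t)) :
    lowSum x (t + 1) ≤ lowSum z (t + 1) := by
  have := sum_min_le_lowSum_add z ht (sortedVal x t)
  rw [sum_min_sortedVal_eq x ht] at h
  linarith

end SortedValues

theorem min_sum_le_sum_min {ι : Type*} {s : Finset ι} {f : ι → ℝ} (hf : ∀ i ∈ s, 0 ≤ f i)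
    {y : ℝ} (hy : 0 ≤ y) : min (∑ i ∈ s, f i) y ≤ ∑ i ∈ s, min (f i) y := by
  by_cases hbig : ∃ i ∈ s, y ≤ f i
  · obtain ⟨i, hi, hyi⟩ := hbig
    calc min (∑ i ∈ s, f i) y ≤ min (f i) y := (min_le_right _ _).trans (le_min hyi le_rfl)
      _ ≤ ∑ i ∈ s, min (f i) y :=
        single_le_sum (f := fun i => min (f i) y) (fun j hj => le_min (hf j hj) hy) hi
  · push Not at hbig
    rw [sum_congr rfl fun i hi => min_eq_left (hbig i hi).le]
    exact min_le_left _ _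

section Bundles

variable {Item : Type*} [Fintype Item] {n : ℕ}

theorem bundleVal_eq_sum_filter (V : Item → ℝ) (P : Item → Fin n) (j : Fin n) :
    bundleVal V P j = ∑ b with P b = j, V b :=
  (sum_filter _ _).symm

theorem sum_bundleVal (V : Item → ℝ) (P : Item → Fin n) : ∑ j, bundleVal V P j = ∑ b, V b := by
  simp only [bundleVal]
  rw [sum_comm]
  simp

theorem bundleVal_nonneg {V : Item → ℝ} (hV : ∀ b, 0 ≤ V b) (P : Item → Fin n) (j : Fin n) :
    0 ≤ bundleVal V P j :=
  sum_nonneg fun b _ => by split_ifs <;> simp [hV b]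

theorem bundleVal_mono {V V' : Item → ℝ} (h : ∀ b, V b ≤ V' b) (P : Item → Fin n) (j : Fin n) :
    bundleVal V P j ≤ bundleVal V' P j :=
  sum_le_sum fun b _ => by split_ifs <;> simp [h b]

theorem sum_min_bundleVal_le {V : Item → ℝ} (hV : ∀ b, 0 ≤ V b) {y : ℝ} (hy : 0 ≤ y)
    (P : Item → Fin n) : ∑ j, min (bundleVal V P j) y ≤ ∑ b, min (V b) y := by
  rw [← sum_bundleVal (fun b => min (V b) y) P]
  refine sum_le_sum fun j _ => ?_
  simp only [bundleVal_eq_sum_filter]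
  exact min_sum_le_sum_min (fun b _ => hV b) hy

/-- The only property of the LPT partition that the bound uses. -/
def CrowdedLoadLeTwiceMin (V : Item → ℝ) (L : Item → Fin n) : Prop :=
  ∀ j, #{b | L b = j} ≤ 1 ∨ ∀ k, bundleVal V L j ≤ 2 * bundleVal V L k

theorem bundleVal_min_le_min {V : Item → ℝ} {L : Item → Fin n}
    (hL : CrowdedLoadLeTwiceMin V L) {y : ℝ} {k : Fin n} (hk : 2 * bundleVal V L k ≤ y)
    (hy : 0 ≤ y) (j : Fin n) :
    bundleVal (fun b => min (V b) y) L j ≤ min (bundleVal V L j) y := by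
  refine le_min (bundleVal_mono (fun b => min_le_left _ _) L j) ?_
  rcases hL j with hcard | htwice
  · rw [bundleVal_eq_sum_filter]
    calc ∑ b with L b = j, min (V b) y ≤ #{b | L b = j} • y :=
          sum_le_card_nsmul _ _ _ fun b _ => min_le_right _ _
      _ ≤ y := by
          rw [nsmul_eq_mul]
          exact mul_le_of_le_one_left hy (by exact_mod_cast hcard)
  · exact (bundleVal_mono (fun b => min_le_left _ _) L j).trans ((htwice k).trans hk)

theorem sum_min_bundleVal_le_of_crowdedLoadLeTwiceMin {V : Item → ℝ} (hV : ∀ b, 0 ≤ V b)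
    {L : Item → Fin n} (hL : CrowdedLoadLeTwiceMin V L) {y : ℝ} {k : Fin n}
    (hk : 2 * bundleVal V L k ≤ y) (P : Item → Fin n) :
    ∑ j, min (bundleVal V P j) y ≤ ∑ j, min (bundleVal V L j) y := by
  have hy : 0 ≤ y := by linarith [bundleVal_nonneg hV L k]
  calc ∑ j, min (bundleVal V P j) y ≤ ∑ b, min (V b) y := sum_min_bundleVal_le hV hy P
    _ = ∑ j, bundleVal (fun b => min (V b) y) L j := (sum_bundleVal _ L).symm
    _ ≤ ∑ j, min (bundleVal V L j) y := sum_le_sum fun j _ => bundleVal_min_le_min hL hk hy j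

/-- If the `t`-th smallest bundle of `P` is worth more than twice the `t`-th smallest bundle of
`L`, capping all values at its value shows that the `t + 1` smallest bundles of `P` are worth
no more in total than those of `L`. -/
theorem lowSum_le_two_mul_lowSum {V : Item → ℝ} (hV : ∀ b, 0 ≤ V b) {L : Item → Fin n}
    (hL : CrowdedLoadLeTwiceMin V L) (P : Item → Fin n) :
    ∀ t ≤ n, lowSum (bundleVal V P) t ≤ 2 * lowSum (bundleVal V L) t := by
  intro t
  induction t with
  | zero => simp [lowSum]
  | succ t ih =>
    intro ht
    by_cases hsmall : sortedVal (bundleVal V P) t ≤ 2 * sortedVal (bundleVal V L) t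
    · simp only [lowSum, sum_range_succ] at ih ⊢
      linarith [ih (by omega)]
    · have hk : 2 * bundleVal V L (Tuple.sort (bundleVal V L) ⟨t, ht⟩)
          ≤ sortedVal (bundleVal V P) t := by
        rw [← sortedVal_val (bundleVal V L) ⟨t, ht⟩]
        exact (not_le.1 hsmall).le
      have := lowSum_succ_le_of_sum_min_le ht
        (sum_min_bundleVal_le_of_crowdedLoadLeTwiceMin hV hL hk P)
      linarith [lowSum_nonneg (bundleVal_nonneg hV L) (t + 1)]

end Bundles

theorem filter_insert_update_eq {α β : Type*} [DecidableEq α] [DecidableEq β] {S : Finset α}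
    {b₀ : α} (hb₀ : b₀ ∉ S) (a : α → β) (j₀ j : β) :
    {b ∈ insert b₀ S | Function.update a b₀ j₀ b = j}
      = if j₀ = j then insert b₀ {b ∈ S | a b = j} else {b ∈ S | a b = j} := by
  have hS : {b ∈ S | Function.update a b₀ j₀ b = j} = {b ∈ S | a b = j} :=
    filter_congr fun b hb => by rw [Function.update_of_ne (ne_of_mem_of_not_mem hb hb₀)]
  rw [filter_insert, Function.update_self, hS]

section LPT

variable {Item : Type*} [DecidableEq Item] {n : ℕ}

theorem argminLoad_le (hn : 0 < n) (load : Fin n → ℝ) (k : Fin n) :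
    load (argminLoad hn load) ≤ load k :=
  (Classical.choose_spec
    (exists_min_image univ load ⟨⟨0, hn⟩, mem_univ _⟩)).2 k (mem_univ k)

noncomputable def lptStep (hn : 0 < n) (V : Item → ℝ) (st : (Item → Fin n) × (Fin n → ℝ))
    (b : Item) : (Item → Fin n) × (Fin n → ℝ) :=
  (Function.update st.1 b (argminLoad hn st.2),
   Function.update st.2 (argminLoad hn st.2) (st.2 (argminLoad hn st.2) + V b))

structure LptInvariant (V : Item → ℝ) (S : Finset Item) (st : (Item → Fin n) × (Fin n → ℝ)) :
    Prop where
  load_eq : ∀ j, st.2 j = ∑ b ∈ S with st.1 b = j, V b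
  crowded : ∀ j, #{b ∈ S | st.1 b = j} ≤ 1 ∨ ∀ k, st.2 j ≤ 2 * st.2 k

/-- The new item is no larger than any earlier one, and an earlier item of the chosen
minimum-load bundle is bounded by its load: so that bundle at most doubles the minimum load. -/
theorem LptInvariant.insert {V : Item → ℝ} (hV : ∀ b, 0 ≤ V b) {S : Finset Item}
    {a : Item → Fin n} {load : Fin n → ℝ} (h : LptInvariant V S (a, load)) {b₀ : Item}
    (hb₀ : b₀ ∉ S) (hb₀_le : ∀ b ∈ S, V b₀ ≤ V b) {j₀ : Fin n} (hmin : ∀ k, load j₀ ≤ load k) :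
    LptInvariant V (insert b₀ S)
      (Function.update a b₀ j₀, Function.update load j₀ (load j₀ + V b₀)) := by
  have hload : ∀ j, load j = ∑ b ∈ S with a b = j, V b := h.load_eq
  have hgrow : ∀ k, load k ≤ Function.update load j₀ (load j₀ + V b₀) k := by
    intro k
    by_cases hk : k = j₀
    · subst hk; simp [hV b₀]
    · simp [hk]
  constructor <;> intro j <;> dsimp only <;> rw [filter_insert_update_eq hb₀]
  · by_cases hj : j₀ = j
    · subst hj
      rw [Function.update_self, if_pos rfl, sum_insert (fun hmem => hb₀ (mem_filter.1 hmem).1),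
        hload, add_comm]
    · rw [Function.update_of_ne (Ne.symm hj), if_neg hj, hload]
  · by_cases hj : j₀ = j
    · subst hj
      rw [if_pos rfl, Function.update_self]
      rcases ({b ∈ S | a b = j₀}).eq_empty_or_nonempty with hempty | ⟨b, hb⟩
      · simp [hempty]
      · refine Or.inr fun k => ?_
        have hb_le : V b ≤ load j₀ := by
          rw [hload]
          exact single_le_sum (fun b _ => hV b) hb
        linarith [hb₀_le b (mem_filter.1 hb).1, hmin k, hgrow k]
    · rw [if_neg hj, Function.update_of_ne (Ne.symm hj)]
      exact (h.crowded j).imp_right fun htwice k => (htwice k).trans (by linarith [hgrow k])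

theorem lptInvariant_foldl (hn : 0 < n) {V : Item → ℝ} (hV : ∀ b, 0 ≤ V b) (l : List Item)
    (hnd : l.Nodup) (hsort : l.Pairwise fun a b => V b ≤ V a) :
    LptInvariant V l.toFinset
      (l.foldl (lptStep hn V) ((fun _ => (⟨0, hn⟩ : Fin n)), fun _ => (0 : ℝ))) := by
  induction l using List.reverseRecOn with
  | nil =>
    exact ⟨fun j => by rw [List.toFinset_nil, filter_empty, sum_empty]; rfl, fun j => by simp⟩
  | append_singleton l b ih =>
    rw [List.nodup_append] at hnd
    rw [List.pairwise_append] at hsort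
    rw [List.foldl_append, List.foldl_cons, List.foldl_nil, List.toFinset_append,
      List.toFinset_cons, List.toFinset_nil, union_insert, union_empty]
    exact (ih hnd.1 hsort.1).insert hV (fun hb => hnd.2.2 b (List.mem_toFinset.1 hb) b
      (List.mem_singleton_self b) rfl) (fun b' hb' => hsort.2.2 b' (List.mem_toFinset.1 hb') b
      (List.mem_singleton_self b)) (argminLoad_le hn _)

theorem crowdedLoadLeTwiceMin_lptOfList [Fintype Item] (hn : 0 < n) {V : Item → ℝ}
    (hV : ∀ b, 0 ≤ V b) {l : List Item} (hnd : l.Nodup) (hmem : ∀ b, b ∈ l)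
    (hsort : l.Pairwise fun a b => V b ≤ V a) : CrowdedLoadLeTwiceMin V (lptOfList hn V l) := by
  have h := lptInvariant_foldl hn hV l hnd hsort
  rw [show l.toFinset = univ from eq_univ_of_forall fun b => List.mem_toFinset.2 (hmem b)] at h
  set st := l.foldl (lptStep hn V) ((fun _ => (⟨0, hn⟩ : Fin n)), fun _ => (0 : ℝ))
  have hval : ∀ k, bundleVal V st.1 k = st.2 k := fun k =>
    (bundleVal_eq_sum_filter V st.1 k).trans (h.load_eq k).symm
  intro j
  change #{b | st.1 b = j} ≤ 1 ∨ ∀ k, bundleVal V st.1 j ≤ 2 * bundleVal V st.1 k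
  simpa only [hval] using h.crowded j

end LPT

theorem sum_mul_le_sum_mul_of_sum_range_le {d a b : ℕ → ℝ} {N : ℕ} (hd : Antitone d)
    (hd₀ : ∀ k, 0 ≤ d k) (hab : ∀ t ≤ N, ∑ k ∈ range t, a k ≤ ∑ k ∈ range t, b k) :
    ∑ k ∈ range N, d k * a k ≤ ∑ k ∈ range N, d k * b k := by
  have hparts := fun c : ℕ → ℝ => sum_range_by_parts d c N
  simp only [smul_eq_mul] at hparts
  rw [hparts a, hparts b]
  refine sub_le_sub (mul_le_mul_of_nonneg_left (hab N le_rfl) (hd₀ _))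
    (sum_le_sum fun i hi => mul_le_mul_of_nonpos_left (hab _ ?_) (sub_nonpos.2 (hd i.le_succ)))
  have := mem_range.1 hi
  omega

section Rearrangement

variable {n : ℕ}

/-- The worst allocation pairs the largest weight with the smallest value, and so on. -/
theorem iInf_sum_perm_mul_eq (w x : Fin n → ℝ) :
    ⨅ A : Equiv.Perm (Fin n), ∑ j, w (A j) * x j
      = ∑ k ∈ range n, sortedVal w (n - (k + 1)) * sortedVal x k := by
  set f : Fin n → ℝ := fun i => w (Tuple.sort w i.rev)
  set g : Fin n → ℝ := fun i => x (Tuple.sort x i)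
  have hfg : Antivary f g :=
    (Tuple.monotone_sort w |>.comp_antitone fun _ _ h => Fin.rev_le_rev.2 h).antivary
      (Tuple.monotone_sort x)
  have hsorted : ∑ k ∈ range n, sortedVal w (n - (k + 1)) * sortedVal x k = ∑ i, f i * g i := by
    rw [← Fin.sum_univ_eq_sum_range (fun k => sortedVal w (n - (k + 1)) * sortedVal x k)]
    refine sum_congr rfl fun i _ => ?_
    rw [← Fin.val_rev, sortedVal_val, sortedVal_val]
  have hreindex : ∀ A : Equiv.Perm (Fin n),
      ∑ j, w (A j) * x j = ∑ i, w (A (Tuple.sort x i)) * g i := fun A =>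
    (Equiv.sum_comp (Tuple.sort x) _).symm
  rw [hsorted]
  refine le_antisymm ((ciInf_le (Set.finite_range _).bddBelow
    ((Tuple.sort x).symm.trans (Fin.revPerm.trans (Tuple.sort w)))).trans_eq ?_) (le_ciInf ?_)
  · rw [hreindex]
    simp [f]
  · intro A
    rw [hreindex]
    convert hfg.sum_mul_le_sum_comp_perm_mul
      (σ := (Tuple.sort x).trans (A.trans ((Tuple.sort w).symm.trans Fin.revPerm))) using 3
    simp [f]

end Rearrangement

theorem iInf_sum_perm_mul_le_mul_iInf {n : ℕ} (hn : 0 < n) {w : Fin n → ℝ} (hw : ∀ j, 0 ≤ w j)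
    {x y : Fin n → ℝ} {c : ℝ} (h : ∀ t ≤ n, lowSum x t ≤ c * lowSum y t) :
    ⨅ A : Equiv.Perm (Fin n), ∑ j, w (A j) * x j
      ≤ c * ⨅ A : Equiv.Perm (Fin n), ∑ j, w (A j) * y j := by
  rw [iInf_sum_perm_mul_eq, iInf_sum_perm_mul_eq, mul_sum]
  simp only [mul_left_comm c]
  refine sum_mul_le_sum_mul_of_sum_range_le (fun k k' hkk' => sortedVal_le_sortedVal w
    (by omega) (by omega)) (fun k => sortedVal_nonneg hw _) fun t ht => ?_
  simpa [lowSum, mul_sum] using h t ht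

theorem lpt_worst_ge_half_EMMS_general {Item : Type*} [Fintype Item] [DecidableEq Item]
    {n : ℕ} (hn : 0 < n) (V : Item → ℝ) (hV : ∀ b, 0 ≤ V b)
    (w : Fin n → ℝ) (hw : ∀ j, 0 ≤ w j)
    (l : List Item) (hnd : l.Nodup) (hmem : ∀ b, b ∈ l)
    (hsort : l.Pairwise fun a b => V b ≤ V a) :
    EMMS V w / 2 ≤ worstU V w (lptOfList hn V l) := by
  have hL := crowdedLoadLeTwiceMin_lptOfList hn hV hnd hmem hsort
  have hworst : ∀ P, worstU V w P ≤ 2 * worstU V w (lptOfList hn V l) := fun P =>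
    iInf_sum_perm_mul_le_mul_iInf hn hw (lowSum_le_two_mul_lowSum hV hL P)
  have : Nonempty (Item → Fin n) := ⟨fun _ => ⟨0, hn⟩⟩
  rw [div_le_iff₀ two_pos, mul_comm]
  exact ciSup_le hworst

/-- In the network externalities model, the worst allocation of
the LPT partition guarantees agent `i` at least half of his
extended-maximin-share. -/
theorem lpt_worst_ge_half_EMMS {Item : Type*} [Fintype Item] [DecidableEq Item]
    {n : ℕ} (hn : 0 < n) (V : Item → ℝ) (hV : ∀ b, 0 ≤ V b)
    (w : Fin n → ℝ) (hw : ∀ j, 0 ≤ w j) (hwsum : ∑ j, w j = 1)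
    (l : List Item) (hnd : l.Nodup) (hmem : ∀ b, b ∈ l)
    (hsort : l.Pairwise fun a b => V b ≤ V a) :
    EMMS V w / 2 ≤ worstU V w (lptOfList hn V l) :=
  lpt_worst_ge_half_EMMS_general hn V hV w hw l hnd hmem hsort
end

section
/- In the network externalities model, if every agent i is α-self-reliant (i.e., w_{i,i} ≥ α for some fixed α with 0 < α ≤ 1), then there exists a partition of M into n bundles together with a bijection assigning one bundle to each agent, under which every agent i receives utility at least (α/2)·EMMS_i. -/
/-!
Greedily match agents to single items worth at least half their share `E i`; a matched agent
gets `α · E i / 2` from its own item alone. For each of the `k` unmatched agents every remaining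
item is worth less than `E i / 2`, so bag filling either gives agent `i` a bag worth what the
matched items (worth `m i` to it) leave short of `E i / 2`, or shows that `i` values the
remaining items at most `(k - 1) (E i - m i) + E i / 2 - m i`. The second case cannot happen:
facing any partition, the adversary can hand the bundles meeting the matched items to lightly
weighted agents and spread the other bundles evenly over the rest, which gives
`E i ≤ m i + V i (rest) / k`.
-/

open Finset

section Combinatorics

variable {α β γ : Type*}

theorem exists_perm_sum_mul_le_average [Fintype α] (g F : α → ℝ) :
    ∃ π : Equiv.Perm α, ∑ a, g (π a) * F a ≤ (∑ a, g a) * (∑ a, F a) / Fintype.card α := by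
  rcases isEmpty_or_nonempty α with hα | hα
  · exact ⟨1, by simp⟩
  set m := Fintype.card α
  have hm : (m : ℝ) ≠ 0 := Nat.cast_ne_zero.mpr Fintype.card_ne_zero
  have : NeZero m := ⟨Fintype.card_ne_zero⟩
  let e := Fintype.equivFin α
  let shift : Fin m → Equiv.Perm α := fun t => (e.trans (Equiv.addRight t)).trans e.symm
  -- as `t` varies, `shift t a` runs through every point exactly once
  have htotal : ∑ t, ∑ a, g (shift t a) * F a = ∑ _t : Fin m, (∑ a, g a) * (∑ a, F a) / m := by
    rw [sum_comm, sum_const, card_univ, Fintype.card_fin, nsmul_eq_mul, mul_div_cancel₀ _ hm,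
      mul_sum]
    refine sum_congr rfl fun a _ => ?_
    rw [← sum_mul]
    congr 1
    exact (Equiv.sum_comp (Equiv.addLeft (e a)) fun s => g (e.symm s)).trans (e.symm.sum_comp g)
  obtain ⟨t, -, ht⟩ := exists_le_of_sum_le univ_nonempty htotal.le
  exact ⟨shift t, ht⟩

theorem exists_perm_eqOn_sum_compl_le [Fintype α] [DecidableEq α] (J : Finset α) (σ : α → α)
    (hσ : Set.InjOn σ J) (w F : α → ℝ) (hw : ∀ a, 0 ≤ w a) (hw1 : ∑ a, w a ≤ 1)
    (hF : ∀ a, 0 ≤ F a) :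
    ∃ B : Equiv.Perm α, (∀ j ∈ J, B j = σ j) ∧
      ∑ j ∈ Jᶜ, w (B j) * F j ≤ (∑ j ∈ Jᶜ, F j) / #Jᶜ := by
  obtain ⟨g, hg⟩ := exists_equiv_extend_of_card_eq (t := univ) (by simp) (subset_univ _) hσ
  let B₀ : Equiv.Perm α := g.trans (Equiv.subtypeUnivEquiv mem_univ)
  have hcompl : ∀ a, a ∈ Jᶜ ↔ a ∉ J := fun a => mem_compl
  obtain ⟨π, hπ⟩ := exists_perm_sum_mul_le_average (fun b : {a // a ∉ J} => w (B₀ b))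
    (fun a => F a)
  refine ⟨(Equiv.Perm.subtypeCongr 1 π).trans B₀, fun j hj => ?_, ?_⟩
  · simp [B₀, Equiv.Perm.subtypeCongr.left_apply _ _ hj, hg j hj]
  have hw_compl : ∑ a ∈ Jᶜ, w (B₀ a) ≤ 1 := calc
    _ ≤ ∑ a, w (B₀ a) := sum_le_univ_sum_of_nonneg fun a => hw _
    _ ≤ 1 := by rwa [Equiv.sum_comp B₀ w]
  rw [sum_subtype Jᶜ hcompl] at hw_compl
  rw [sum_subtype Jᶜ hcompl, sum_subtype Jᶜ hcompl, ← Fintype.card_of_subtype Jᶜ hcompl]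
  calc _ = ∑ j : {a // a ∉ J}, w (B₀ (π j)) * F j := by
        refine Fintype.sum_congr _ _ fun j => ?_
        simp [Equiv.Perm.subtypeCongr.right_apply _ _ j.2]
    _ ≤ _ := hπ
    _ ≤ _ := by
      rw [mul_div_assoc]
      exact mul_le_of_le_one_left
        (div_nonneg (Fintype.sum_nonneg fun a => hF a) (Nat.cast_nonneg _)) hw_compl

theorem exists_injOn_mapsTo_of_card_le [DecidableEq β] (G : Finset α) (h : α → β)
    (hh : Set.InjOn h G) (K : Finset β) (hK : #G ≤ #K) :
    ∃ ι : α → β, Set.InjOn ι G ∧ (∀ x ∈ G, ι x ∈ K) ∧ ∀ x ∈ G, h x ∈ K → ι x = h x := by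
  classical
  set G₁ := G.filter (h · ∈ K)
  have hG₁ : #(G₁.image h) ≤ #G := card_image_le.trans (card_le_card (filter_subset _ _))
  obtain ⟨T, hT₁, hTK, hT⟩ := exists_subsuperset_card_eq
    (image_subset_iff.mpr fun x hx => (mem_filter.mp hx).2) hG₁ hK
  obtain ⟨g, hg⟩ := exists_equiv_extend_of_card_eq (α := G) (t := T)
    (s := univ.filter fun x => h x ∈ K) (f := fun x => h x) (by simp [hT])
    (fun _ hx => hT₁ (by simpa [G₁, and_comm] using hx))
    (fun x _ y _ hxy => Subtype.ext (hh x.2 y.2 hxy))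
  refine ⟨fun x => if hx : x ∈ G then g ⟨x, hx⟩ else h x, fun x hx y hy hxy => ?_,
    fun x hx => ?_, fun x hx hxK => ?_⟩
  · simp only [mem_coe] at hx hy
    simp only [hx, hy, dite_true] at hxy
    exact congrArg Subtype.val (g.injective (Subtype.ext hxy))
  · simpa [hx] using hTK (g ⟨x, hx⟩).2
  · simpa [hx] using hg ⟨x, hx⟩ (by simpa using hxK)

theorem exists_injOn_image_le_fiberwise [Nonempty β] [DecidableEq γ] (G : Finset α)
    (Q : α → γ) (ι : α → β) (hι : Set.InjOn ι G) (w : β → ℝ) :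
    ∃ ω : γ → β, Set.InjOn ω (G.image Q) ∧ (∀ x ∈ G, w (ω (Q x)) ≤ w (ι x)) ∧
      ∀ j ∈ G.image Q, ∃ x ∈ G, ω j = ι x := by
  have hrep : ∀ j ∈ G.image Q, ∃ k, ∃ x ∈ G, Q x = j ∧ ι x = k ∧
      ∀ y ∈ G, Q y = j → w k ≤ w (ι y) := by
    intro j hj
    obtain ⟨x, hx, hmin⟩ := exists_min_image (G.filter (Q · = j)) (w ∘ ι)
      (by simpa [Finset.Nonempty, and_comm] using hj)
    simp only [mem_filter] at hx
    exact ⟨ι x, x, hx.1, hx.2, rfl, fun y hy hQy => hmin y (mem_filter.mpr ⟨hy, hQy⟩)⟩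
  choose! ω hω using hrep
  refine ⟨ω, fun j hj j' hj' hjj' => ?_, fun x hx => ?_, fun j hj => ?_⟩
  · obtain ⟨x, hx, rfl, hxω, -⟩ := hω j hj
    obtain ⟨x', hx', rfl, hxω', -⟩ := hω j' hj'
    rw [hι hx hx' (hxω.trans (hjj'.trans hxω'.symm))]
  · obtain ⟨-, -, -, -, hmin⟩ := hω (Q x) (mem_image_of_mem Q hx)
    exact hmin x hx rfl
  · obtain ⟨x, hx, -, hxω, -⟩ := hω j hj
    exact ⟨x, hx, hxω.symm⟩

theorem exists_maximal_matching [Finite α] [Finite β] [Nonempty β] [DecidableEq β]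
    (V : β → α → ℝ) (τ : β → ℝ) :
    ∃ (G : Finset α) (h : α → β), Set.InjOn h G ∧ (∀ x ∈ G, τ (h x) ≤ V (h x) x) ∧
      ∀ a ∉ G.image h, ∀ x ∉ G, V a x < τ a := by
  classical
  let matchings : Set (Finset α × (α → β)) :=
    {p | Set.InjOn p.2 p.1 ∧ ∀ x ∈ p.1, τ (p.2 x) ≤ V (p.2 x) x}
  obtain ⟨⟨G, h⟩, ⟨hinj, hgood⟩, hmax⟩ := Set.exists_max_image matchings (fun p => #p.1)
    (Set.toFinite _) ⟨(∅, fun _ => Classical.arbitrary β), by simp [matchings]⟩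
  refine ⟨G, h, hinj, hgood, fun a ha x hx => ?_⟩
  by_contra! hax
  have hext : (insert x G, Function.update h x a) ∈ matchings := by
    have heq : Set.EqOn h (Function.update h x a) G := fun y hy =>
      (Function.update_of_ne (ne_of_mem_of_not_mem hy hx) _ _).symm
    refine ⟨?_, fun y hy => ?_⟩
    · dsimp only
      rw [coe_insert, Set.injOn_insert (by simpa using hx), Function.update_self,
        ← heq.image_eq]
      exact ⟨hinj.congr heq, by simpa using ha⟩
    · rcases mem_insert.mp hy with rfl | hy
      · simpa using hax
      · simpa [Function.update_of_ne (ne_of_mem_of_not_mem hy hx)] using hgood y hy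
  have := hmax _ hext
  simp [card_insert_of_notMem hx] at this

end Combinatorics

section BagFilling

variable {α β : Type*} [DecidableEq α] (V : β → α → ℝ) (ρ σ : β → ℝ)

theorem exists_minimal_bag (A : Finset β) (N : Finset α)
    (hsmall : ∀ a ∈ A, ∀ x ∈ N, V a x ≤ σ a) (hρσ : ∀ a ∈ A, 0 ≤ ρ a + σ a)
    (hbig : ∃ a ∈ A, ρ a ≤ ∑ x ∈ N, V a x) :
    ∃ C ⊆ N, (∃ a ∈ A, ρ a ≤ ∑ x ∈ C, V a x) ∧ ∀ b ∈ A, ∑ x ∈ C, V b x ≤ ρ b + σ b := by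
  classical
  obtain ⟨C, hC, hmin⟩ := exists_min_image
    (N.powerset.filter fun C => ∃ a ∈ A, ρ a ≤ ∑ x ∈ C, V a x) card
    ⟨N, mem_filter.mpr ⟨mem_powerset_self N, hbig⟩⟩
  obtain ⟨hCN, hCbig⟩ := mem_filter.mp hC
  refine ⟨C, mem_powerset.mp hCN, hCbig, fun b hb => ?_⟩
  rcases C.eq_empty_or_nonempty with rfl | ⟨x, hx⟩
  · simpa using hρσ b hb
  have hsmaller : ∑ y ∈ C.erase x, V b y < ρ b := by
    by_contra! hge
    have := hmin (C.erase x) (mem_filter.mpr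
      ⟨mem_powerset.mpr ((erase_subset x C).trans (mem_powerset.mp hCN)), b, hb, hge⟩)
    exact (card_erase_lt_of_mem hx).not_ge this
  rw [← sum_erase_add C _ hx]
  linarith [hsmall b hb x (mem_powerset.mp hCN hx)]

theorem exists_bag_filling [Nonempty β] [DecidableEq β] (hV : ∀ a x, 0 ≤ V a x)
    (A : Finset β) (N : Finset α) (hsmall : ∀ a ∈ A, ∀ x ∈ N, V a x ≤ σ a)
    (hρσ : ∀ a ∈ A, 0 ≤ ρ a + σ a) :
    ∃ f : α → β, ∀ a ∈ A, ρ a ≤ ∑ x ∈ N with f x = a, V a x ∨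
      ∑ x ∈ N, V a x ≤ (#A - 1) * (ρ a + σ a) + ρ a := by
  induction A using Finset.strongInduction generalizing N with
  | H A ih =>
  by_cases hbig : ∃ a ∈ A, ρ a ≤ ∑ x ∈ N, V a x
  swap
  · push Not at hbig
    refine ⟨fun _ => Classical.arbitrary β, fun a ha => Or.inr ?_⟩
    have : (1 : ℝ) ≤ #A := by exact_mod_cast card_pos.mpr ⟨a, ha⟩
    nlinarith [hbig a ha, hρσ a ha]
  -- the agent `a₀` wanting the minimal bag `C` takes it; the others share `N \ C`
  obtain ⟨C, hCN, ⟨a₀, ha₀, hC⟩, hCsmall⟩ := exists_minimal_bag V ρ σ A N hsmall hρσ hbig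
  obtain ⟨f, hf⟩ := ih (A.erase a₀) (erase_ssubset ha₀) (N \ C)
    (fun a ha x hx => hsmall a (mem_of_mem_erase ha) x (mem_sdiff.mp hx).1)
    (fun a ha => hρσ a (mem_of_mem_erase ha))
  refine ⟨fun x => if x ∈ C then a₀ else f x, fun a ha => ?_⟩
  obtain rfl | hne := eq_or_ne a a₀
  · refine Or.inl (hC.trans (sum_le_sum_of_subset_of_nonneg ?_ fun x _ _ => hV _ x))
    intro x hx
    simp [hx, hCN hx]
  have hcard : (#(A.erase a₀) : ℝ) = #A - 1 := by
    rw [← card_erase_add_one ha₀]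
    push_cast
    ring
  rcases hf a (mem_erase.mpr ⟨hne, ha⟩) with hbag | hrest
  · refine Or.inl (hbag.trans (sum_le_sum_of_subset_of_nonneg ?_ fun x _ _ => hV a x))
    intro x hx
    simp only [mem_filter, mem_sdiff] at hx ⊢
    simp [hx]
  · right
    rw [← sum_sdiff hCN]
    rw [hcard] at hrest
    linarith [hCsmall a ha]

end BagFilling

section Shares

variable {Item : Type*} [Fintype Item] {n : ℕ}

theorem utility_eq_sum (V : Item → ℝ) (w : Fin n → ℝ) (P : Item → Fin n)
    (A : Equiv.Perm (Fin n)) : utility V w P A = ∑ x, w (A (P x)) * V x := by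
  classical
  simp_rw [utility, bundleVal, mul_sum, mul_ite, mul_zero]
  rw [sum_comm]
  simp

theorem worstU_le_utility (V : Item → ℝ) (w : Fin n → ℝ) (P : Item → Fin n)
    (A : Equiv.Perm (Fin n)) : worstU V w P ≤ utility V w P A :=
  ciInf_le (Set.finite_range _).bddBelow A

theorem EMMS_le_of_forall_worstU_le (hn : 0 < n) (V : Item → ℝ) (w : Fin n → ℝ) {c : ℝ}
    (h : ∀ P : Item → Fin n, worstU V w P ≤ c) : EMMS V w ≤ c :=
  have : Nonempty (Item → Fin n) := ⟨fun _ => ⟨0, hn⟩⟩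
  ciSup_le h

theorem EMMS_nonneg (hn : 0 < n) (V : Item → ℝ) (hV : ∀ x, 0 ≤ V x) (w : Fin n → ℝ)
    (hw : ∀ j, 0 ≤ w j) : 0 ≤ EMMS V w := by
  let P : Item → Fin n := fun _ => ⟨0, hn⟩
  have hP : 0 ≤ worstU V w P := le_ciInf fun A => by
    rw [utility_eq_sum]
    exact sum_nonneg fun x _ => mul_nonneg (hw _) (hV x)
  exact hP.trans (le_ciSup (Set.finite_range _).bddAbove P)

theorem le_card_filter_le_inv_sub {ι : Type*} [Fintype ι] (w : ι → ℝ) (hw : ∀ k, 0 ≤ w k)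
    (hw1 : ∑ k, w k ≤ 1) {d : ℕ} (hd : d < Fintype.card ι) :
    d ≤ #{k | w k ≤ 1 / (Fintype.card ι - d)} := by
  set c : ℝ := 1 / (Fintype.card ι - d)
  have hc : 0 < c := one_div_pos.mpr (by rw [sub_pos]; exact_mod_cast hd)
  have hheavy : (#{k | ¬ w k ≤ c} : ℝ) * c ≤ 1 := by
    rw [← nsmul_eq_mul]
    refine (card_nsmul_le_sum _ _ _ fun k hk => ?_).trans
      ((sum_le_univ_sum_of_nonneg hw).trans hw1)
    exact (not_le.mp (mem_filter.mp hk).2).le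
  have hsplit := card_filter_add_card_filter_not (s := univ) fun k => w k ≤ c
  rw [card_univ] at hsplit
  rw [← le_div_iff₀ hc, one_div_one_div, ← hsplit] at hheavy
  push_cast at hheavy
  exact_mod_cast (by linarith : (d : ℝ) ≤ #{k | w k ≤ c})

variable [DecidableEq Item]

theorem worstU_le_of_forall_le_inv_sub (V : Item → ℝ) (hV : ∀ x, 0 ≤ V x) (w : Fin n → ℝ)
    (hw : ∀ j, 0 ≤ w j) (hw1 : ∑ j, w j ≤ 1) (G : Finset Item) (hG : #G < n)
    (ι : Item → Fin n) (hι : Set.InjOn ι G) (hlight : ∀ x ∈ G, w (ι x) ≤ 1 / (n - #G))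
    (Q : Item → Fin n) :
    worstU V w Q ≤ ∑ x ∈ G, w (ι x) * V x + (∑ x ∈ Gᶜ, V x) / (n - #G) := by
  have : Nonempty (Fin n) := ⟨⟨0, by omega⟩⟩
  have hd : (0 : ℝ) < n - #G := by rw [sub_pos]; exact_mod_cast hG
  set J := G.image Q
  let F : Fin n → ℝ := fun j => ∑ x ∈ Gᶜ with Q x = j, V x
  have hF : ∀ j, 0 ≤ F j := fun j => sum_nonneg fun x _ => hV x
  -- each bundle meeting `G` goes to the lightest label among its items of `G`,
  -- the other bundles to the other agents, at no more than the average weight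
  obtain ⟨ω, hωinj, hωmin, hωlabel⟩ := exists_injOn_image_le_fiberwise G Q ι hι w
  obtain ⟨B, hBJ, hBJc⟩ := exists_perm_eqOn_sum_compl_le J ω hωinj w F hw hw1 hF
  have hJ : ∑ j ∈ J, w (B j) * F j ≤ (∑ j ∈ J, F j) / (n - #G) := by
    rw [sum_div]
    refine sum_le_sum fun j hj => ?_
    obtain ⟨x, hx, hωx⟩ := hωlabel j hj
    rw [hBJ j hj, hωx, ← one_div_mul_eq_div]
    exact mul_le_mul_of_nonneg_right (hlight x hx) (hF j)
  have hJc : ∑ j ∈ Jᶜ, w (B j) * F j ≤ (∑ j ∈ Jᶜ, F j) / (n - #G) := by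
    refine hBJc.trans (div_le_div_of_nonneg_left (sum_nonneg fun j _ => hF j) hd ?_)
    have hJcard : n ≤ #Jᶜ + #G := by
      have h₁ : #J + #Jᶜ = n := by rw [card_add_card_compl, Fintype.card_fin]
      have h₂ : #J ≤ #G := card_image_le
      omega
    rw [sub_le_iff_le_add]
    exact_mod_cast hJcard
  have hsplit : utility V w Q B = ∑ x ∈ G, w (B (Q x)) * V x + ∑ j, w (B j) * F j := by
    rw [utility_eq_sum, ← sum_add_sum_compl G, ← sum_fiberwise Gᶜ Q fun x => w (B (Q x)) * V x]
    congr 1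
    refine sum_congr rfl fun j _ => ?_
    rw [mul_sum]
    exact sum_congr rfl fun x hx => by rw [(mem_filter.mp hx).2]
  calc worstU V w Q ≤ utility V w Q B := worstU_le_utility V w Q B
    _ ≤ ∑ x ∈ G, w (ι x) * V x + ((∑ j ∈ J, F j) + ∑ j ∈ Jᶜ, F j) / (n - #G) := by
      rw [hsplit, add_div, ← sum_add_sum_compl J]
      gcongr with x hx
      · exact hV x
      · rw [hBJ _ (mem_image_of_mem Q hx)]
        exact hωmin x hx
    _ = ∑ x ∈ G, w (ι x) * V x + (∑ x ∈ Gᶜ, V x) / (n - #G) := by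
      rw [sum_add_sum_compl, sum_fiberwise]

theorem EMMS_le_sum_add_div_card_compl (V : Item → ℝ) (hV : ∀ x, 0 ≤ V x) (w : Fin n → ℝ)
    (hw : ∀ j, 0 ≤ w j) (hw1 : ∑ j, w j ≤ 1) (G : Finset Item) (h : Item → Fin n)
    (hh : Set.InjOn h G) (hfree : (G.image h)ᶜ.Nonempty) :
    EMMS V w ≤ ∑ x ∈ G, w (h x) * V x + (∑ x ∈ Gᶜ, V x) / #(G.image h)ᶜ := by
  obtain ⟨i, hi⟩ := hfree
  have hG : #G < n := (card_image_of_injOn hh).symm.trans_lt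
    (card_lt_univ_of_notMem (mem_compl.mp hi)) |>.trans_eq (Fintype.card_fin n)
  have hk : (#(G.image h)ᶜ : ℝ) = n - #G := by
    rw [card_compl, Fintype.card_fin, card_image_of_injOn hh, Nat.cast_sub hG.le]
  rw [hk]
  have hK := le_card_filter_le_inv_sub w hw hw1 (hG.trans_eq (Fintype.card_fin n).symm)
  rw [Fintype.card_fin] at hK
  -- trading heavy labels for unused light ones only lowers the right-hand side
  obtain ⟨ι, hι, hιK, hιh⟩ := exists_injOn_mapsTo_of_card_le G h hh _ hK
  have hιle : ∀ x ∈ G, w (ι x) ≤ 1 / (n - #G) := fun x hx => by simpa using hιK x hx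
  refine EMMS_le_of_forall_worstU_le ((Nat.zero_le _).trans_lt hG) V w fun Q =>
    (worstU_le_of_forall_le_inv_sub V hV w hw hw1 G hG ι hι hιle Q).trans ?_
  gcongr with x hx
  · exact hV x
  by_cases hhx : w (h x) ≤ 1 / (n - #G)
  · rw [hιh x hx (by simpa using hhx)]
  · exact (hιle x hx).trans (not_le.mp hhx).le

theorem sum_add_mul_sum_filter_le_utility_piecewise (V : Item → ℝ) (hV : ∀ x, 0 ≤ V x)
    (w : Fin n → ℝ) (hw : ∀ j, 0 ≤ w j) (G : Finset Item) (h f : Item → Fin n) (i : Fin n) :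
    ∑ x ∈ G, w (h x) * V x + w i * ∑ x ∈ Gᶜ with f x = i, V x ≤
      utility V w (G.piecewise h f) 1 := by
  rw [utility_eq_sum, ← sum_add_sum_compl G]
  simp only [Equiv.Perm.coe_one, id_eq]
  refine add_le_add (sum_congr rfl fun x hx => by rw [piecewise_eq_of_mem _ _ _ hx]).le ?_
  rw [mul_sum, sum_filter]
  refine sum_le_sum fun x hx => ?_
  split_ifs with hfx
  · rw [piecewise_eq_of_notMem _ _ _ (mem_compl.mp hx), hfx]
  · exact mul_nonneg (hw _) (hV x)

end Shares

theorem half_mul_le_of_bag_or_starving {α w E m B T k : ℝ} (hα : α ≤ 1) (hαw : α ≤ w)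
    (hw : 0 ≤ w) (hE : 0 ≤ E) (hm : 0 ≤ m) (hB : 0 ≤ B) (hk : 1 ≤ k)
    (hshare : E ≤ m + T / k)
    (hfill : max 0 (E / 2 - m) ≤ B ∨
      T ≤ (k - 1) * (max 0 (E / 2 - m) + E / 2) + max 0 (E / 2 - m)) :
    α / 2 * E ≤ m + w * B := by
  rcases le_or_gt (E / 2) m with hsat | hshort
  · nlinarith [mul_nonneg hw hB]
  rw [max_eq_right (by linarith)] at hfill
  rcases hfill with hbag | hT
  · nlinarith [mul_le_mul_of_nonneg_left hbag hw]
  · rw [← sub_le_iff_le_add', le_div_iff₀ (by linarith)] at hshare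
    nlinarith

theorem exists_half_alpha_EMMS_allocation_general {Item : Type*} [Fintype Item]
    {n : ℕ} (hn : 0 < n)
    (V : Fin n → Item → ℝ) (hV : ∀ i b, 0 ≤ V i b)
    (w : Fin n → Fin n → ℝ) (hw : ∀ j i, 0 ≤ w j i)
    (hwsum : ∀ i, ∑ j, w j i = 1)
    (α : ℝ) (hα1 : α ≤ 1) (hself : ∀ i, α ≤ w i i) :
    ∃ (P : Item → Fin n) (A : Equiv.Perm (Fin n)),
      ∀ i, α / 2 * EMMS (V i) (fun j => w j i) ≤
        utility (V i) (fun j => w j i) P A := by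
  classical
  have : Nonempty (Fin n) := ⟨⟨0, hn⟩⟩
  set E := fun i => EMMS (V i) (fun j => w j i)
  have hE i : 0 ≤ E i := EMMS_nonneg hn _ (hV i) _ fun j => hw j i
  obtain ⟨G, h, hinj, hmatched, hunmatched⟩ := exists_maximal_matching V fun i => E i / 2
  set m := fun i => ∑ x ∈ G, w (h x) i * V i x
  have hm i : 0 ≤ m i := sum_nonneg fun x _ => mul_nonneg (hw _ i) (hV i x)
  obtain ⟨f, hf⟩ := exists_bag_filling V (fun i => max 0 (E i / 2 - m i)) (fun i => E i / 2) hV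
    (G.image h)ᶜ Gᶜ (fun a ha x hx => (hunmatched a (mem_compl.mp ha) x (mem_compl.mp hx)).le)
    (fun a _ => add_nonneg (le_max_left _ _) (div_nonneg (hE a) zero_le_two))
  refine ⟨G.piecewise h f, 1, fun i => le_trans ?_
    (sum_add_mul_sum_filter_le_utility_piecewise (V i) (hV i) _ (fun j => hw j i) G h f i)⟩
  have hB : 0 ≤ ∑ x ∈ Gᶜ with f x = i, V i x := sum_nonneg fun x _ => hV i x
  by_cases hi : i ∈ G.image h
  · obtain ⟨x, hx, rfl⟩ := mem_image.mp hi
    calc α / 2 * E (h x) ≤ w (h x) (h x) * V (h x) x := by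
          nlinarith [hmatched x hx, hself (h x), hE (h x), hw (h x) (h x)]
      _ ≤ m (h x) := single_le_sum (f := fun y => w (h y) (h x) * V (h x) y)
          (fun y _ => mul_nonneg (hw _ _) (hV _ y)) hx
      _ ≤ _ := le_add_of_nonneg_right (mul_nonneg (hw _ _) hB)
  have hfree : (G.image h)ᶜ.Nonempty := ⟨i, mem_compl.mpr hi⟩
  exact half_mul_le_of_bag_or_starving hα1 (hself i) (hw i i) (hE i) (hm i) hB
    (by exact_mod_cast card_pos.mpr hfree)
    (EMMS_le_sum_add_div_card_compl (V i) (hV i) _ (fun j => hw j i) (hwsum i).le G h hinj hfree)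
    (hf i (mem_compl.mpr hi))

/-- If every agent `i` is `α`-self-reliant (`w i i ≥ α`,
`0 < α ≤ 1`), then there is a partition of the items into `n` bundles together
with a bijection assigning one bundle to each agent under which every agent `i`
receives utility at least `(α/2) · EMMS_i`. -/
theorem exists_half_alpha_EMMS_allocation {Item : Type*} [Fintype Item]
    {n : ℕ} (hn : 0 < n)
    (V : Fin n → Item → ℝ) (hV : ∀ i b, 0 ≤ V i b)
    (w : Fin n → Fin n → ℝ) (hw : ∀ j i, 0 ≤ w j i)
    (hwsum : ∀ i, ∑ j, w j i = 1)
    (α : ℝ) (hα0 : 0 < α) (hα1 : α ≤ 1) (hself : ∀ i, α ≤ w i i) :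
    ∃ (P : Item → Fin n) (A : Equiv.Perm (Fin n)),
      ∀ i, α / 2 * EMMS (V i) (fun j => w j i) ≤
        utility (V i) (fun j => w j i) P A :=
  exists_half_alpha_EMMS_allocation_general hn V hV w hw hwsum α hα1 hself
end

section
/- In the general externalities model, for every agent i, the extended-maximin-share is at most the average-share: EMMS_i ≤ V̄_i(M). (Average-share is a stronger notion than extended-maximin-share.) -/
/-!
General externalities model.  Items form a finite type `Item`; a partition of the
items into `n` bundles is a function `Item → Fin n`; an allocation of a partition
is a bijection `A : Fin n ≃ Fin n` assigning bundle `j` to agent `A j`.  We fix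
one agent `i`; `V j b` denotes `V_{j,i}({b})`, the (additive) utility that agent
`i` receives when item `b` is allocated to agent `j`.
-/

/-- Utility of the fixed agent under the allocation `A` of the partition `P`:
`U_i(A) = ∑ j V_{A(j),i}(P_j)`. -/
noncomputable def gUtility {Item : Type*} [Fintype Item] {n : ℕ}
    (V : Fin n → Item → ℝ) (P : Item → Fin n) (A : Equiv.Perm (Fin n)) : ℝ :=
  ∑ j, ∑ b, if P b = j then V (A j) b else 0

/-- Utility of the worst allocation of the partition `P` for the fixed agent. -/
noncomputable def gWorst {Item : Type*} [Fintype Item] {n : ℕ}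
    (V : Fin n → Item → ℝ) (P : Item → Fin n) : ℝ :=
  ⨅ A : Equiv.Perm (Fin n), gUtility V P A

/-- Utility of the best allocation of the partition `P` for the fixed agent. -/
noncomputable def gBest {Item : Type*} [Fintype Item] {n : ℕ}
    (V : Fin n → Item → ℝ) (P : Item → Fin n) : ℝ :=
  ⨆ A : Equiv.Perm (Fin n), gUtility V P A

/-- Extended-maximin-share of the fixed agent. -/
noncomputable def gEMMS {Item : Type*} [Fintype Item] {n : ℕ}
    (V : Fin n → Item → ℝ) : ℝ :=
  ⨆ P : Item → Fin n, gWorst V P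

section GeneralExternalities

variable {Item : Type*} [Fintype Item] {n : ℕ} (V : Fin n → Item → ℝ) (P : Item → Fin n)

theorem gUtility_eq_sum (A : Equiv.Perm (Fin n)) :
    gUtility V P A = ∑ b, V (A (P b)) b := by
  unfold gUtility
  rw [Finset.sum_comm]
  simp only [Finset.sum_ite_eq, Finset.mem_univ, ↓reduceIte]

theorem gWorst_le_gUtility (A : Equiv.Perm (Fin n)) : gWorst V P ≤ gUtility V P A :=
  ciInf_le (Finite.bddBelow_range _) A

/-- Under the `n` cyclic shifts `j ↦ k + j`, each bundle goes to every agent exactly once. -/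
theorem sum_gUtility_addLeft [NeZero n] :
    ∑ k : Fin n, gUtility V P (Equiv.addLeft k) = ∑ b, ∑ j, V j b := by
  simp only [gUtility_eq_sum]
  rw [Finset.sum_comm]
  refine Finset.sum_congr rfl fun b _ => ?_
  exact Fintype.sum_equiv (Equiv.addRight (P b)) _ _ fun _ => rfl

theorem gWorst_le_averageShare [NeZero n] : gWorst V P ≤ (∑ b, ∑ j, V j b) / n := by
  rw [le_div_iff₀ (by exact_mod_cast Nat.pos_of_neZero n), ← sum_gUtility_addLeft V P]
  calc gWorst V P * n = ∑ _k : Fin n, gWorst V P := by simp [mul_comm]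
    _ ≤ ∑ k : Fin n, gUtility V P (Equiv.addLeft k) :=
      Finset.sum_le_sum fun k _ => gWorst_le_gUtility V P _

end GeneralExternalities

theorem gEMMS_le_averageShare_general {Item : Type*} [Fintype Item] {n : ℕ} (hn : 0 < n)
    (V : Fin n → Item → ℝ) :
    gEMMS V ≤ (∑ b, ∑ j, V j b) / n := by
  have : NeZero n := ⟨hn.ne'⟩
  exact ciSup_le fun P => gWorst_le_averageShare V P

/-- In the general externalities model, the extended-maximin-share
of an agent is at most his average-share `V̄_i(M) = (∑_b ∑_j V_{j,i}({b})) / n`. -/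
theorem gEMMS_le_averageShare {Item : Type*} [Fintype Item] {n : ℕ} (hn : 0 < n)
    (V : Fin n → Item → ℝ) (hV : ∀ j b, 0 ≤ V j b) :
    gEMMS V ≤ (∑ b, ∑ j, V j b) / n :=
  gEMMS_le_averageShare_general hn V
end

section
/- Extended-maximin-share does not imply extended-proportionality, nor vice versa. Concretely, fix n ≥ 2 agents, a single item b, and V_{1,1}({b}) = V > 0: (i) in the instance where V_{j,1}({b}) = 0 for all j ≠ 1, one has EMMS_1 = 0 while the extended-proportional share of agent 1 equals V/n > 0; (ii) in the instance where V_{j,1}({b}) = V for all j, one has EMMS_1 = V while the extended-proportional share of agent 1 is still V/n < V. -/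
/-- Extended-proportional share of the fixed agent:
`V̂_i / n` where `V̂_i = ∑_b max_j V_{j,i}({b})`. -/
noncomputable def gPropShare {Item : Type*} [Fintype Item] {n : ℕ}
    (V : Fin n → Item → ℝ) : ℝ :=
  (∑ b, ⨆ j, V j b) / n

/- With a single item, a permutation can hand the bundle containing it to any agent, so the
worst allocation of every partition is `⨅ j, V j b`: the EMMS is the minimum of the values,
while the proportional share is their maximum divided by `n`. -/

section SingleItem

variable {Item : Type*} [Fintype Item] [Unique Item] {n : ℕ}

theorem gUtility_eq_of_unique (V : Fin n → Item → ℝ) (P : Item → Fin n)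
    (A : Equiv.Perm (Fin n)) : gUtility V P A = V (A (P default)) default := by
  simp only [gUtility, Fintype.sum_unique, Finset.sum_ite_eq, Finset.mem_univ, if_true]

theorem gWorst_eq_iInf_of_unique (V : Fin n → Item → ℝ) (P : Item → Fin n) :
    gWorst V P = ⨅ j, V j default := by
  have hsurj : Function.Surjective fun A : Equiv.Perm (Fin n) => A (P default) :=
    fun j => ⟨Equiv.swap (P default) j, Equiv.swap_apply_left _ _⟩
  simp only [gWorst, gUtility_eq_of_unique]
  exact hsurj.iInf_comp fun j => V j default

theorem gEMMS_eq_iInf_of_unique [NeZero n] (V : Fin n → Item → ℝ) :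
    gEMMS V = ⨅ j, V j default := by
  simp only [gEMMS, gWorst_eq_iInf_of_unique, ciSup_const]

theorem gPropShare_eq_iSup_div_of_unique (V : Fin n → Item → ℝ) :
    gPropShare V = (⨆ j, V j default) / n := by
  rw [gPropShare, Fintype.sum_unique]

end SingleItem

/-- Extended-maximin-share does not imply extended-proportionality,
nor vice versa.  With `n ≥ 2` agents, a single item (the item type is `Unit`) and
`V_{1,1}({b}) = Vval > 0` (agent `1` is index `0`):
(i) if `V_{j,1}({b}) = 0` for all `j ≠ 1`, then `EMMS_1 = 0` while the
extended-proportional share of agent `1` is `Vval/n > 0`;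
(ii) if `V_{j,1}({b}) = Vval` for all `j`, then `EMMS_1 = Vval` while the
extended-proportional share of agent `1` is still `Vval/n < Vval`. -/
theorem emms_propShare_no_implication {n : ℕ} (hn : 2 ≤ n)
    (Vval : ℝ) (hVval : 0 < Vval) :
    (gEMMS (Item := Unit) (n := n) (fun j _ => if (j : ℕ) = 0 then Vval else 0) = 0
      ∧ gPropShare (Item := Unit) (n := n)
          (fun j _ => if (j : ℕ) = 0 then Vval else 0) = Vval / n
      ∧ 0 < Vval / n)
    ∧ (gEMMS (Item := Unit) (n := n) (fun _ _ => Vval) = Vval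
      ∧ gPropShare (Item := Unit) (n := n) (fun _ _ => Vval) = Vval / n
      ∧ Vval / n < Vval) := by
  have : NeZero n := ⟨by omega⟩
  have hn1 : (1 : ℝ) < n := by exact_mod_cast hn
  have hmin : IsLeast (Set.range fun j : Fin n => if (j : ℕ) = 0 then Vval else 0) 0 :=
    ⟨⟨⟨1, hn⟩, if_neg one_ne_zero⟩, by
      rintro _ ⟨j, rfl⟩
      dsimp only
      split_ifs <;> linarith⟩
  have hmax : IsGreatest (Set.range fun j : Fin n => if (j : ℕ) = 0 then Vval else 0) Vval :=
    ⟨⟨0, if_pos rfl⟩, by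
      rintro _ ⟨j, rfl⟩
      dsimp only
      split_ifs <;> linarith⟩
  refine ⟨⟨?_, ?_, by positivity⟩, ⟨?_, ?_, div_lt_self hVval hn1⟩⟩
  · rw [gEMMS_eq_iInf_of_unique]
    exact hmin.csInf_eq
  · rw [gPropShare_eq_iSup_div_of_unique]
    exact congrArg (· / (n : ℝ)) hmax.csSup_eq
  · rw [gEMMS_eq_iInf_of_unique, ciInf_const]
  · rw [gPropShare_eq_iSup_div_of_unique, ciSup_const]
end

section
/- In the network externalities model, for every agent i and every partition P of M into n bundles, there exists a partition P' of M into n bundles that is nice for agent i and satisfies U_i(worst_i(P')) ≥ U_i(worst_i(P)). -/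
/-- A partition `P` is *nice* for the agent if no item `b` (lying in the bundle
`P b`) satisfies `V_i(P_{P b}) > V_i({b}) > min_k V_i(P_k)`. -/
def NicePartition {Item : Type*} [Fintype Item] (V : Item → ℝ) {n : ℕ}
    (P : Item → Fin n) : Prop :=
  ¬ ∃ b : Item, V b < bundleVal V P (P b) ∧ (⨅ k : Fin n, bundleVal V P k) < V b

open Finset

section

variable {Item : Type*} [Fintype Item] {V : Item → ℝ} {n : ℕ}

lemma not_nicePartition_iff {P : Item → Fin n} :
    ¬ NicePartition V P ↔ ∃ b m, bundleVal V P m < V b ∧ V b < bundleVal V P (P b) := by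
  rw [NicePartition, not_not]
  constructor
  · rintro ⟨b, hb, hmin⟩
    have : Nonempty (Fin n) := ⟨P b⟩
    obtain ⟨m, hm⟩ := exists_eq_ciInf_of_finite (f := bundleVal V P)
    exact ⟨b, m, hm ▸ hmin, hb⟩
  · rintro ⟨b, m, hm, hb⟩
    exact ⟨b, hb, (ciInf_le (Finite.bddBelow_range _) m).trans_lt hm⟩

lemma utility_comp_perm (w : Fin n → ℝ) (P : Item → Fin n) (A σ : Equiv.Perm (Fin n)) :
    ∑ j, w (A j) * bundleVal V P (σ j) = utility V w P (σ.symm.trans A) := by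
  rw [utility, ← Equiv.sum_comp σ (fun k => w ((σ.symm.trans A) k) * bundleVal V P k)]
  simp

lemma worstU_le_of_bundleVal_eq_convex (w : Fin n → ℝ) {P Q : Item → Fin n}
    {σ : Equiv.Perm (Fin n)} {t : ℝ} (ht₀ : 0 ≤ t) (ht₁ : t ≤ 1)
    (hQ : ∀ j, bundleVal V Q j = t * bundleVal V P j + (1 - t) * bundleVal V P (σ j)) :
    worstU V w P ≤ worstU V w Q := by
  have hbdd := Finite.bddBelow_range (utility V w P)
  refine le_ciInf fun A => ?_
  have hA : utility V w Q A
      = t * utility V w P A + (1 - t) * utility V w P (σ.symm.trans A) := by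
    rw [← utility_comp_perm, utility, utility, mul_sum, mul_sum, ← sum_add_distrib]
    refine sum_congr rfl fun j _ => ?_
    rw [hQ]
    ring
  rw [hA]
  calc worstU V w P = t * worstU V w P + (1 - t) * worstU V w P := by ring
    _ ≤ _ := add_le_add (mul_le_mul_of_nonneg_left (ciInf_le hbdd _) ht₀)
        (mul_le_mul_of_nonneg_left (ciInf_le hbdd _) (sub_nonneg.2 ht₁))

def isolate [DecidableEq Item] (P : Item → Fin n) (b : Item) (m : Fin n) : Item → Fin n :=
  fun x => if P x = P b ∧ x ≠ b then m else P x

variable [DecidableEq Item] {P : Item → Fin n} {b : Item} {m : Fin n}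

lemma bundleVal_isolate_self (hm : m ≠ P b) : bundleVal V (isolate P b m) (P b) = V b := by
  calc bundleVal V (isolate P b m) (P b) = ∑ x, if x = b then V x else 0 :=
        sum_congr rfl fun x _ => by unfold isolate; split_ifs <;> simp_all
    _ = V b := by simp

lemma bundleVal_isolate_target (hm : m ≠ P b) :
    bundleVal V (isolate P b m) m = bundleVal V P (P b) + bundleVal V P m - V b := by
  have hpoint : ∀ x, (if isolate P b m x = m then V x else 0) = (if P x = P b then V x else 0)
      + (if P x = m then V x else 0) - (if x = b then V x else 0) := by
    intro x
    unfold isolate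
    split_ifs <;> simp_all
  rw [bundleVal, sum_congr rfl fun x _ => hpoint x, sum_sub_distrib, sum_add_distrib,
    sum_ite_eq' univ b V, if_pos (mem_univ b), bundleVal, bundleVal]

lemma bundleVal_isolate_of_ne {j : Fin n} (hjb : j ≠ P b) (hjm : j ≠ m) :
    bundleVal V (isolate P b m) j = bundleVal V P j := by
  refine sum_congr rfl fun x _ => ?_
  unfold isolate
  split_ifs <;> simp_all

variable (hlo : bundleVal V P m < V b) (hhi : V b < bundleVal V P (P b))
include hlo hhi

lemma sum_sq_bundleVal_isolate_lt :
    ∑ j, bundleVal V (isolate P b m) j ^ 2 < ∑ j, bundleVal V P j ^ 2 := by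
  have hm : m ≠ P b := by rintro rfl; linarith
  have hchange : ∑ j, (bundleVal V (isolate P b m) j ^ 2 - bundleVal V P j ^ 2)
      = ∑ j ∈ {P b, m}, (bundleVal V (isolate P b m) j ^ 2 - bundleVal V P j ^ 2) := by
    refine (sum_subset (subset_univ _) fun j _ hj => ?_).symm
    rw [mem_insert, mem_singleton, not_or] at hj
    rw [bundleVal_isolate_of_ne hj.1 hj.2, sub_self]
  rw [sum_pair hm.symm, bundleVal_isolate_self hm, bundleVal_isolate_target hm,
    sum_sub_distrib] at hchange
  nlinarith [mul_pos (sub_pos.2 hlo) (sub_pos.2 hhi)]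

lemma worstU_le_worstU_isolate (w : Fin n → ℝ) : worstU V w P ≤ worstU V w (isolate P b m) := by
  have hm : m ≠ P b := by rintro rfl; linarith
  have hgap : 0 < bundleVal V P (P b) - bundleVal V P m := by linarith
  -- `t` solves `t * V(P_{P b}) + (1 - t) * V(P_m) = V b`
  refine worstU_le_of_bundleVal_eq_convex w (σ := Equiv.swap (P b) m)
    (t := (V b - bundleVal V P m) / (bundleVal V P (P b) - bundleVal V P m))
    (div_nonneg (by linarith) hgap.le) ((div_le_one hgap).2 (by linarith)) fun j => ?_
  rcases eq_or_ne j (P b) with rfl | hjb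
  · rw [bundleVal_isolate_self hm, Equiv.swap_apply_left]
    field_simp
    ring
  rcases eq_or_ne j m with rfl | hjm
  · rw [bundleVal_isolate_target hm, Equiv.swap_apply_right]
    field_simp
    ring
  · rw [bundleVal_isolate_of_ne hjb hjm, Equiv.swap_apply_of_ne_of_ne hjb hjm]
    ring

end

theorem exists_nice_partition_ge_general {Item : Type*} [Fintype Item] {n : ℕ}
    (V : Item → ℝ)
    (w : Fin n → ℝ)
    (P : Item → Fin n) :
    ∃ P' : Item → Fin n, NicePartition V P' ∧ worstU V w P ≤ worstU V w P' := by
  classical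
  obtain ⟨Q, hPQ, hQmin⟩ := Set.exists_min_image {Q | worstU V w P ≤ worstU V w Q}
    (fun Q => ∑ j, bundleVal V Q j ^ 2) (Set.toFinite _) ⟨P, le_refl (worstU V w P)⟩
  refine ⟨Q, ?_, hPQ⟩
  by_contra hQ
  obtain ⟨b, m, hlo, hhi⟩ := not_nicePartition_iff.1 hQ
  exact (sum_sq_bundleVal_isolate_lt hlo hhi).not_ge
    (hQmin _ (hPQ.trans (worstU_le_worstU_isolate hlo hhi w)))

/-- For every partition `P` of the items into `n` bundles there
is a nice partition `P'` with `U_i(worst_i(P')) ≥ U_i(worst_i(P))`. -/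
theorem exists_nice_partition_ge {Item : Type*} [Fintype Item] {n : ℕ} (hn : 0 < n)
    (V : Item → ℝ) (hV : ∀ b, 0 ≤ V b)
    (w : Fin n → ℝ) (hw : ∀ j, 0 ≤ w j) (hwsum : ∑ j, w j = 1)
    (P : Item → Fin n) :
    ∃ P' : Item → Fin n, NicePartition V P' ∧ worstU V w P ≤ worstU V w P' :=
  exists_nice_partition_ge_general V w P
end

section
/- Let v_1 ≥ v_2 ≥ … ≥ v_n ≥ 0, let 0 ≤ x_1 ≤ x_2 ≤ … ≤ x_n with Σ_{j=1}^n x_j = 1, and let 0 < α ≤ 1 with x_n ≥ α. Then for every ℓ with 1 ≤ ℓ ≤ n, (1/2)·Σ_{k<ℓ} v_k·x_k + (α/2)·v_ℓ ≥ (α/2)·Σ_{k=1}^n v_k·x_k. -/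
/-! Split the sum at `ℓ`. The head is nonnegative and `α ≤ 1`, so it is dominated by half of
itself; the tail is a sub-probability average of values at most `v ℓ`. -/

open Finset

theorem Finset.sum_mul_le_of_le_of_sum_le_one {ι : Type*} (s : Finset ι) {v x : ι → ℝ} {c : ℝ}
    (hc : 0 ≤ c) (hv : ∀ k ∈ s, v k ≤ c) (hx0 : ∀ k ∈ s, 0 ≤ x k) (hx : ∑ k ∈ s, x k ≤ 1) :
    ∑ k ∈ s, v k * x k ≤ c :=
  calc ∑ k ∈ s, v k * x k ≤ ∑ k ∈ s, c * x k :=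
        sum_le_sum fun k hk => mul_le_mul_of_nonneg_right (hv k hk) (hx0 k hk)
    _ = c * ∑ k ∈ s, x k := (mul_sum s x c).symm
    _ ≤ c * 1 := mul_le_mul_of_nonneg_left hx hc
    _ = c := mul_one c

theorem Antitone.sum_filter_not_lt_mul_le {ι : Type*} [Fintype ι] [LinearOrder ι] {v x : ι → ℝ}
    (hv : Antitone v) (ℓ : ι) (hvℓ : 0 ≤ v ℓ) (hx0 : ∀ j, 0 ≤ x j) (hxsum : ∑ j, x j ≤ 1) :
    ∑ k ∈ univ.filter (fun k => ¬ k < ℓ), v k * x k ≤ v ℓ := by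
  refine sum_mul_le_of_le_of_sum_le_one _ hvℓ (fun k hk => hv (not_lt.mp (mem_filter.mp hk).2))
    (fun k _ => hx0 k) ?_
  exact (sum_le_sum_of_subset_of_nonneg (filter_subset _ _) fun k _ _ => hx0 k).trans hxsum

theorem expectation_level_bound_general {n : ℕ} (v x : Fin n → ℝ)
    (hv0 : ∀ j, 0 ≤ v j) (hv : Antitone v)
    (hx0 : ∀ j, 0 ≤ x j) (hxsum : ∑ j, x j = 1)
    (α : ℝ) (hα0 : 0 < α) (hα1 : α ≤ 1)
    (ℓ : Fin n) :
    α / 2 * ∑ k, v k * x k ≤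
      1 / 2 * ∑ k ∈ Finset.univ.filter (fun k => k < ℓ), v k * x k + α / 2 * v ℓ := by
  rw [← sum_filter_add_sum_filter_not univ (fun k => k < ℓ), mul_add]
  have head_nonneg : 0 ≤ ∑ k ∈ univ.filter (fun k => k < ℓ), v k * x k :=
    sum_nonneg fun k _ => mul_nonneg (hv0 k) (hx0 k)
  have tail_le := hv.sum_filter_not_lt_mul_le ℓ (hv0 ℓ) hx0 hxsum.le
  exact add_le_add (mul_le_mul_of_nonneg_right (by linarith) head_nonneg)
    (mul_le_mul_of_nonneg_left tail_le (by linarith))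

/-- Let `v` be non-increasing and nonnegative, `x` be
non-decreasing and nonnegative with `∑ j, x j = 1`, and `0 < α ≤ 1` with the
largest weight `x (n-1) ≥ α`.  Then for every `ℓ`,
`(1/2)·∑_{k<ℓ} v k · x k + (α/2)·v ℓ ≥ (α/2)·∑ k, v k · x k`. -/
theorem expectation_level_bound {n : ℕ} (hn : 0 < n) (v x : Fin n → ℝ)
    (hv0 : ∀ j, 0 ≤ v j) (hv : Antitone v)
    (hx0 : ∀ j, 0 ≤ x j) (hx : Monotone x) (hxsum : ∑ j, x j = 1)
    (α : ℝ) (hα0 : 0 < α) (hα1 : α ≤ 1)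
    (hxn : α ≤ x ⟨n - 1, Nat.sub_lt hn Nat.one_pos⟩) (ℓ : Fin n) :
    α / 2 * ∑ k, v k * x k ≤
      1 / 2 * ∑ k ∈ Finset.univ.filter (fun k => k < ℓ), v k * x k + α / 2 * v ℓ :=
  expectation_level_bound_general v x hv0 hv hx0 hxsum α hα0 hα1 ℓ
end

section
/- Let w_1,…,w_n ≥ 0 and let x_1 ≤ x_2 ≤ … ≤ x_n be their non-decreasing rearrangement. Let v_1 ≥ v_2 ≥ … ≥ v_n ≥ 0, let ℓ ∈ {1,…,n}, let S ⊆ {1,…,n}, and let B_k ≥ 0 for k ∈ S. Suppose S is partitioned into pairwise disjoint sets N_1,…,N_{ℓ−1}, N_F such that for every j < ℓ: v_j/2 ≤ Σ_{k∈N_j} B_k ≤ v_j. Then Σ_{k∈S} w_k·B_k ≥ (1/2)·Σ_{j<ℓ} x_j·v_j. -/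
/-!
In every block `N j` with `0 < v j` pick the agent `a j` of least influence; the block then
contributes at least `w (a j) * v j / 2`. The blocks are disjoint, so the `a j` are distinct, and
since `x` is increasing and `v` decreasing, the rearrangement inequality gives
`∑ x j * v j ≤ ∑ w (a j) * v j`.
-/

open Finset

section

variable {ι κ α : Type*}

theorem Monotone.sum_mul_le_sum_comp_mul_of_injOn [Semiring α] [LinearOrder α]
    [IsStrictOrderedRing α] [ExistsAddOfLE α] [Fintype ι] [LinearOrder ι] {x v : ι → α}
    (hx : Monotone x) (hv : Antitone v) {s : Finset ι} {f : ι → ι} (hf : Set.InjOn f s)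
    (hvs : ∀ j ∉ s, v j = 0) :
    ∑ j, x j * v j ≤ ∑ j ∈ s, x (f j) * v j := by
  classical
  obtain ⟨τ, hτ⟩ := exists_equiv_extend_of_card_eq (t := univ) (by simp) (subset_univ _) hf
  let π : Equiv.Perm ι := τ.trans (Equiv.subtypeUnivEquiv mem_univ)
  calc ∑ j, x j * v j ≤ ∑ j, x (π j) * v j := (hx.antivary hv).sum_mul_le_sum_comp_perm_mul
    _ = ∑ j ∈ s, x (f j) * v j := by
      rw [← sum_subset (subset_univ s) fun j _ hj => by simp [hvs j hj]]
      exact sum_congr rfl fun j hj => by simp [π, hτ j hj]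

theorem Finset.Nonempty.exists_mem_mul_sum_le_sum_mul [Semiring α] [LinearOrder α]
    [IsOrderedRing α] {N : Finset ι} (hN : N.Nonempty) (w : ι → α) {B : ι → α} (hB : ∀ k ∈ N, 0 ≤ B k) :
    ∃ k ∈ N, w k * ∑ i ∈ N, B i ≤ ∑ i ∈ N, w i * B i := by
  obtain ⟨k, hk, hmin⟩ := N.exists_min_image w hN
  refine ⟨k, hk, ?_⟩
  rw [mul_sum]
  exact sum_le_sum fun i hi => mul_le_mul_of_nonneg_right (hmin i hi) (hB i hi)

theorem Finset.sum_sum_le_sum_of_pairwiseDisjoint [AddCommMonoid α] [PartialOrder α]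
    [IsOrderedAddMonoid α] [DecidableEq κ] {s : Finset ι} {N : ι → Finset κ} {S : Finset κ}
    (hN : (s : Set ι).PairwiseDisjoint N) (hNS : ∀ j ∈ s, N j ⊆ S) {f : κ → α}
    (hf : ∀ k ∈ S, 0 ≤ f k) :
    ∑ j ∈ s, ∑ k ∈ N j, f k ≤ ∑ k ∈ S, f k := by
  rw [← sum_biUnion hN]
  exact sum_le_sum_of_subset_of_nonneg (biUnion_subset.2 hNS) fun k hk _ => hf k hk

theorem Antitone.ite_lt_of_nonneg [Preorder ι] [Preorder α] [Zero α] {v : ι → α}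
    (hv : Antitone v) (hv0 : ∀ j, 0 ≤ v j) (L : ι) [DecidablePred (· < L)] :
    Antitone fun j => if j < L then v j else 0 := fun i j hij => by
  by_cases hj : j < L
  · simp [hj, hij.trans_lt hj, hv hij]
  · by_cases hi : i < L <;> simp [hi, hj, hv0]

end

theorem external_satisfaction_bound_general {n : ℕ}
    (w x v B : Fin n → ℝ)
    (hw : ∀ k, 0 ≤ w k)
    (σ : Equiv.Perm (Fin n)) (hx : x = w ∘ σ) (hxmono : Monotone x)
    (hv0 : ∀ j, 0 ≤ v j) (hv : Antitone v)
    (hB : ∀ k, 0 ≤ B k)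
    (L : Fin n) (S : Finset (Fin n)) (N : Fin n → Finset (Fin n)) (NF : Finset (Fin n))
    (hdisj : ∀ j j' : Fin n, j < L → j' < L → j ≠ j' → Disjoint (N j) (N j'))
    (hunion : (Finset.univ.filter (fun j => j < L)).biUnion N ∪ NF = S)
    (hlow : ∀ j : Fin n, j < L → v j / 2 ≤ ∑ k ∈ N j, B k) :
    1 / 2 * ∑ j ∈ Finset.univ.filter (fun j => j < L), x j * v j ≤
      ∑ k ∈ S, w k * B k := by
  -- a block `N j` with `v j = 0` may be empty, so only blocks with `0 < v j` get an agent `a j`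
  set s := univ.filter fun j => j < L ∧ 0 < v j
  have hs : ∀ j ∈ s, j < L ∧ 0 < v j := fun j hj => (mem_filter.1 hj).2
  have hblock : ∀ j ∈ s, ∃ k ∈ N j, w k * (v j / 2) ≤ ∑ i ∈ N j, w i * B i := by
    intro j hj
    obtain ⟨hjL, hvj⟩ := hs j hj
    have hne : (N j).Nonempty := nonempty_of_sum_ne_zero (f := B) (by linarith [hlow j hjL])
    obtain ⟨k, hk, hle⟩ := hne.exists_mem_mul_sum_le_sum_mul w fun i _ => hB i
    exact ⟨k, hk, (mul_le_mul_of_nonneg_left (hlow j hjL) (hw k)).trans hle⟩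
  choose! a haN ha using hblock
  have hdisj_s : (s : Set (Fin n)).PairwiseDisjoint N :=
    fun j hj j' hj' hne => hdisj j j' (hs j hj).1 (hs j' hj').1 hne
  have hinj : Set.InjOn (σ.symm ∘ a) s := fun j hj j' hj' h =>
    hdisj_s.elim_finset hj hj' (a j) (haN j hj) (σ.symm.injective h ▸ haN j' hj')
  let v' : Fin n → ℝ := fun j => if j < L then v j else 0
  have hv's : ∀ j ∉ s, v' j = 0 := fun j hj => by
    by_cases hjL : j < L
    · have hvj : v j ≤ 0 := by simpa [s, hjL] using hj
      simp [v', hjL, le_antisymm hvj (hv0 j)]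
    · simp [v', hjL]
  calc 1 / 2 * ∑ j ∈ univ.filter (fun j => j < L), x j * v j
      = 1 / 2 * ∑ j, x j * v' j := by simp [sum_filter, v', mul_ite]
    _ ≤ 1 / 2 * ∑ j ∈ s, x ((σ.symm ∘ a) j) * v' j := by
      gcongr
      exact hxmono.sum_mul_le_sum_comp_mul_of_injOn (hv.ite_lt_of_nonneg hv0 L) hinj hv's
    _ = ∑ j ∈ s, w (a j) * (v j / 2) := by
      rw [mul_sum]
      refine sum_congr rfl fun j hj => ?_
      simp only [hx, v', Function.comp_apply, Equiv.apply_symm_apply, if_pos (hs j hj).1]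
      ring
    _ ≤ ∑ j ∈ s, ∑ i ∈ N j, w i * B i := sum_le_sum ha
    _ ≤ ∑ k ∈ S, w k * B k := by
      refine sum_sum_le_sum_of_pairwiseDisjoint hdisj_s (fun j hj => ?_)
        fun k _ => mul_nonneg (hw k) (hB k)
      rw [← hunion]
      exact subset_union_left.trans' (subset_biUnion_of_mem N (by simp [(hs j hj).1]))

/-- Under the external-satisfaction validity conditions,
`∑_{k∈S} w k · B k ≥ (1/2) · ∑_{j<L} x j · v j`. -/
theorem external_satisfaction_bound {n : ℕ}
    (w x v B : Fin n → ℝ)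
    (hw : ∀ k, 0 ≤ w k)
    (σ : Equiv.Perm (Fin n)) (hx : x = w ∘ σ) (hxmono : Monotone x)
    (hv0 : ∀ j, 0 ≤ v j) (hv : Antitone v)
    (hB : ∀ k, 0 ≤ B k)
    (L : Fin n) (S : Finset (Fin n)) (N : Fin n → Finset (Fin n)) (NF : Finset (Fin n))
    (hdisj : ∀ j j' : Fin n, j < L → j' < L → j ≠ j' → Disjoint (N j) (N j'))
    (hdisjF : ∀ j : Fin n, j < L → Disjoint (N j) NF)
    (hunion : (Finset.univ.filter (fun j => j < L)).biUnion N ∪ NF = S)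
    (hlow : ∀ j : Fin n, j < L → v j / 2 ≤ ∑ k ∈ N j, B k)
    (hhigh : ∀ j : Fin n, j < L → ∑ k ∈ N j, B k ≤ v j) :
    1 / 2 * ∑ j ∈ Finset.univ.filter (fun j => j < L), x j * v j ≤
      ∑ k ∈ S, w k * B k :=
  external_satisfaction_bound_general w x v B hw σ hx hxmono hv0 hv hB L S N NF hdisj hunion hlow
end
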